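/- Let η₁, …, η_r be orthonormal vectors in a real Hilbert space H, let Φ be an n-dimensional subspace of H, let p = min{n, r}, suppose P_Φ η₁, …, P_Φ η_p are linearly independent, and let q₁, …, q_p be their Gram–Schmidt orthonormalization. Let 1 ≤ j ≤ k ≤ p and assume d_2(span{η₁, …, η_{j−1}}, Φ) < 1 (with span{η₁, …, η₀} = {0} when j = 1). Then d_F(span{η_j, …, η_k}, Φ)² ≤ d_F(span{q_j, …, q_k}, span{η_j, …, η_k})² ≤ d_F(span{η_j, …, η_k}, Φ)² / (1 − d_2(span{η₁, …, η_{j−1}}, Φ)²). -/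

import Mathlib

/-!
Write `E = span{η_j, …, η_k}`, `F = span{η_1, …, η_{j-1}}`, `G = span{q_1, …, q_{j-1}}` and
`δ = d₂(F, Φ)`. Since `P_Φ η_m ∈ span{q_1, …, q_k} ⊆ Φ` for `m ≤ k`, Parseval's identity in the
orthonormal families `(η_m)` and `(q_l)` gives the exact decomposition
`d_F(span{q_j, …, q_k}, E)² = d_F(E, Φ)² + ∑_{m=j}^k ‖P_G η_m‖²`,
which is the lower bound. For the upper bound, `G ⊆ P_Φ F` and `η_m ⊥ F` for `m ≥ j`. Writing
`P_G η_m = P_Φ f` with `f ∈ F`, one gets `‖P_G η_m‖² = -⟪P_{Φᗮ} f, P_{Φᗮ} η_m⟫ ≤ δ ‖f‖ ‖P_{Φᗮ} η_m‖`,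
while `‖f‖² = ‖P_G η_m‖² + ‖P_{Φᗮ} f‖² ≤ ‖P_G η_m‖² + δ² ‖f‖²`; together
`(1 - δ²) ‖P_G η_m‖² ≤ δ² ‖P_{Φᗮ} η_m‖²`, and summing over `m` finishes the proof.
-/

open scoped RealInnerProductSpace ENNReal
open Submodule Filter

noncomputable section

variable {H : Type*} [NormedAddCommGroup H] [InnerProductSpace ℝ H] [CompleteSpace H]

/-- Orthogonal projection onto `U`, as an operator `H → H` (defined to be `0` in the
degenerate case where `U` admits no orthogonal projection). -/
noncomputable def proj (U : Submodule ℝ H) : H →L[ℝ] H := by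
  classical
  exact if h : HasOrthogonalProjection U then
    (haveI := h; U.subtypeL ∘L orthogonalProjection U)
  else 0

/-- Squared Hilbert–Schmidt norm of an operator, computed in a fixed Hilbert basis of `H`. -/
noncomputable def hsNormSq (A : H →L[ℝ] H) : ℝ≥0∞ :=
  ∑' i : (exists_hilbertBasis ℝ H).choose,
    (‖A ((exists_hilbertBasis ℝ H).choose_spec.choose i)‖₊ : ℝ≥0∞) ^ 2

/-- Hilbert–Schmidt (Frobenius) norm of an operator. -/
noncomputable def hsNorm (A : H →L[ℝ] H) : ℝ := Real.sqrt (hsNormSq A).toReal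

/-- Projection distance `d_F(U, W) = ‖P_{Wᗮ} P_U‖_F`. -/
noncomputable def dF (U W : Submodule ℝ H) : ℝ := hsNorm ((proj Wᗮ) ∘L (proj U))

/-- Gap distance `d₂(U, W) = ‖P_{Wᗮ} P_U‖₂`. -/
noncomputable def d2 (U W : Submodule ℝ H) : ℝ := ‖(proj Wᗮ) ∘L (proj U)‖

instance Submodule.finiteDimensional_span_of_finite {K V : Type*} [DivisionRing K]
    [AddCommGroup V] [Module K V] (S : Set V) [Finite S] : FiniteDimensional K (span K S) :=
  FiniteDimensional.span_of_finite K S.toFinite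

section

variable {H : Type*} [NormedAddCommGroup H] [InnerProductSpace ℝ H]

lemma proj_eq_starProjection (U : Submodule ℝ H) [U.HasOrthogonalProjection] :
    proj U = U.starProjection := by
  simp only [proj, dif_pos ‹U.HasOrthogonalProjection›]
  rfl

lemma starProjection_eq_of_le_of_mem {K U : Submodule ℝ H} [K.HasOrthogonalProjection]
    [U.HasOrthogonalProjection] (hKU : K ≤ U) {x : H} (hx : U.starProjection x ∈ K) :
    K.starProjection x = U.starProjection x :=
  eq_starProjection_of_mem_orthogonal hx (orthogonal_le hKU (sub_starProjection_mem_orthogonal x))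

lemma mem_orthogonal_span_of_inner_eq_zero {S : Set H} {x : H} (h : ∀ y ∈ S, ⟪y, x⟫ = 0) :
    x ∈ (span ℝ S)ᗮ :=
  (isOrtho_span.2 fun y hy z hz => by rw [Set.mem_singleton_iff.1 hz]; exact h y hy).symm
    (mem_span_singleton_self x)

section OrthonormalOn

variable {ι : Type*} [DecidableEq ι]

def OrthonormalOn (u : ι → H) (s : Set ι) : Prop :=
  ∀ i ∈ s, ∀ j ∈ s, ⟪u i, u j⟫ = if i = j then 1 else 0

variable {u : ι → H} {s t : Set ι}

lemma OrthonormalOn.mono (hu : OrthonormalOn u s) (hts : t ⊆ s) : OrthonormalOn u t :=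
  fun i hi j hj => hu i (hts hi) j (hts hj)

lemma OrthonormalOn.norm_eq_one (hu : OrthonormalOn u s) {i : ι} (hi : i ∈ s) : ‖u i‖ = 1 := by
  have h := hu i hi i hi
  rw [if_pos rfl, real_inner_self_eq_norm_sq] at h
  exact (pow_eq_one_iff_of_nonneg (norm_nonneg _) two_ne_zero).1 h

lemma OrthonormalOn.insert (hu : OrthonormalOn u s) {a : ι} (ha : ‖u a‖ = 1)
    (hperp : ∀ i ∈ s, i ≠ a → ⟪u i, u a⟫ = 0) : OrthonormalOn u (insert a s) := by
  intro i hi j hj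
  by_cases hij : i = j
  · subst hij
    by_cases hia : i = a
    · rw [if_pos rfl, real_inner_self_eq_norm_sq, hia, ha, one_pow]
    · exact hu i (hi.resolve_left hia) i (hi.resolve_left hia)
  rw [if_neg hij]
  by_cases hia : i = a
  · subst hia
    rw [real_inner_comm]
    exact hperp j (hj.resolve_left (Ne.symm hij)) (Ne.symm hij)
  by_cases hja : j = a
  · subst hja
    exact hperp i (hi.resolve_left hia) hia
  simpa [hij] using hu i (hi.resolve_left hia) j (hj.resolve_left hja)

variable {s : Finset ι}

lemma OrthonormalOn.inner_right_sum (hu : OrthonormalOn u s) {i : ι} (hi : i ∈ s)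
    (c : ι → ℝ) : ⟪u i, ∑ j ∈ s, c j • u j⟫ = c i := by
  simp only [inner_sum, real_inner_smul_right]
  rw [Finset.sum_congr rfl fun j hj => by rw [hu i hi j hj]]
  simp [hi]

lemma OrthonormalOn.starProjection_span_eq_sum (hu : OrthonormalOn u s) (x : H) :
    (span ℝ (u '' s)).starProjection x = ∑ i ∈ s, ⟪u i, x⟫ • u i := by
  refine eq_starProjection_of_mem_orthogonal
    (sum_mem fun i hi => smul_mem _ _ (subset_span (Set.mem_image_of_mem u hi)))
    (mem_orthogonal_span_of_inner_eq_zero ?_)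
  rintro _ ⟨i, hi, rfl⟩
  rw [inner_sub_right, hu.inner_right_sum hi, sub_self]

lemma OrthonormalOn.norm_sq_starProjection_span (hu : OrthonormalOn u s) (x : H) :
    ‖(span ℝ (u '' s)).starProjection x‖ ^ 2 = ∑ i ∈ s, ⟪u i, x⟫ ^ 2 := by
  rw [← real_inner_self_eq_norm_sq, hu.starProjection_span_eq_sum, sum_inner]
  refine Finset.sum_congr rfl fun i hi => ?_
  rw [real_inner_smul_left, hu.inner_right_sum hi, sq]

lemma OrthonormalOn.hasSum_norm_sq_comp_starProjection_span {κ : Type*}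
    (b : HilbertBasis κ ℝ H) (hu : OrthonormalOn u s) (A : H →L[ℝ] H) :
    HasSum (fun c => ‖A ((span ℝ (u '' s)).starProjection (b c))‖ ^ 2)
      (∑ i ∈ s, ‖A (u i)‖ ^ 2) := by
  have hexpand : ∀ c, ‖A ((span ℝ (u '' s)).starProjection (b c))‖ ^ 2 =
      ∑ i ∈ s, ∑ i' ∈ s, ⟪u i, b c⟫ * ⟪b c, u i'⟫ * ⟪A (u i), A (u i')⟫ := by
    intro c
    rw [hu.starProjection_span_eq_sum, ← real_inner_self_eq_norm_sq, map_sum, sum_inner]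
    refine Finset.sum_congr rfl fun i _ => ?_
    rw [inner_sum]
    refine Finset.sum_congr rfl fun i' _ => ?_
    simp only [map_smul, real_inner_smul_left, real_inner_smul_right,
      real_inner_comm (u i') (b c)]
    ring
  have hsum : ∑ i ∈ s, ∑ i' ∈ s, ⟪u i, u i'⟫ * ⟪A (u i), A (u i')⟫ =
      ∑ i ∈ s, ‖A (u i)‖ ^ 2 := by
    refine Finset.sum_congr rfl fun i hi => ?_
    rw [Finset.sum_congr rfl fun i' hi' => by rw [hu i hi i' hi']]
    simp only [ite_mul, one_mul, zero_mul, Finset.sum_ite_eq, if_pos hi,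
      real_inner_self_eq_norm_sq]
  rw [funext hexpand, ← hsum]
  exact hasSum_sum fun i _ => hasSum_sum fun i' _ =>
    (b.hasSum_inner_mul_inner (u i) (u i')).mul_right _

variable [CompleteSpace H]

lemma OrthonormalOn.hsNorm_comp_starProjection_span_sq (hu : OrthonormalOn u s)
    (A : H →L[ℝ] H) :
    hsNorm (A ∘L (span ℝ (u '' s)).starProjection) ^ 2 = ∑ i ∈ s, ‖A (u i)‖ ^ 2 := by
  have h := hu.hasSum_norm_sq_comp_starProjection_span
    (exists_hilbertBasis ℝ H).choose_spec.choose A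
  have hnonneg : 0 ≤ ∑ i ∈ s, ‖A (u i)‖ ^ 2 := Finset.sum_nonneg fun _ _ => sq_nonneg _
  rw [hsNorm, hsNormSq, Real.sq_sqrt ENNReal.toReal_nonneg, ← ENNReal.toReal_ofReal hnonneg,
    ← h.tsum_eq, ENNReal.ofReal_tsum_of_nonneg (fun _ => sq_nonneg _) h.summable]
  congr 1
  refine tsum_congr fun c => ?_
  rw [ContinuousLinearMap.comp_apply, ENNReal.ofReal_pow (norm_nonneg _), ofReal_norm,
    enorm_eq_nnnorm]

lemma OrthonormalOn.dF_span_sq (hu : OrthonormalOn u s) (W : Submodule ℝ H)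
    [W.HasOrthogonalProjection] :
    dF (span ℝ (u '' s)) W ^ 2 = ∑ i ∈ s, ‖Wᗮ.starProjection (u i)‖ ^ 2 := by
  rw [dF, proj_eq_starProjection, proj_eq_starProjection, hu.hsNorm_comp_starProjection_span_sq]

end OrthonormalOn

section GapEstimate

lemma one_sub_sq_mul_le_sq_mul_sq {a b c δ : ℝ} (ha : 0 ≤ a) (habc : a ≤ δ * b * c)
    (hba : (1 - δ ^ 2) * b ^ 2 ≤ a) : (1 - δ ^ 2) * a ≤ δ ^ 2 * c ^ 2 := by
  rcases le_or_gt (1 - δ ^ 2) 0 with hδ | hδ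
  · nlinarith [sq_nonneg (δ * c)]
  have hsq : a * a ≤ δ ^ 2 * b ^ 2 * c ^ 2 := by nlinarith [mul_self_le_mul_self ha habc]
  have hmul : (1 - δ ^ 2) * a * a ≤ δ ^ 2 * c ^ 2 * a := by
    nlinarith [mul_le_mul_of_nonneg_left hsq hδ.le,
      mul_le_mul_of_nonneg_left hba (by positivity : 0 ≤ δ ^ 2 * c ^ 2)]
  rcases ha.eq_or_lt with rfl | ha'
  · nlinarith [sq_nonneg (δ * c)]
  · exact le_of_mul_le_mul_right hmul ha'

lemma d2_nonneg (F Φ : Submodule ℝ H) : 0 ≤ d2 F Φ :=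
  norm_nonneg _

variable {F Φ : Submodule ℝ H} [Φ.HasOrthogonalProjection]

lemma norm_starProjection_orthogonal_le_d2_mul [F.HasOrthogonalProjection] {f : H} (hf : f ∈ F) :
    ‖Φᗮ.starProjection f‖ ≤ d2 F Φ * ‖f‖ := by
  rw [d2, proj_eq_starProjection, proj_eq_starProjection]
  simpa [starProjection_eq_self_iff.2 hf] using
    (Φᗮ.starProjection ∘L F.starProjection).le_opNorm f

lemma inner_starProjection_eq_neg_inner_orthogonal {f x : H} (hf : f ∈ F) (hx : x ∈ Fᗮ) :
    ⟪Φ.starProjection f, x⟫ = -⟪Φᗮ.starProjection f, Φᗮ.starProjection x⟫ := by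
  have hfx : ⟪f, x⟫ = 0 := inner_right_of_mem_orthogonal hf hx
  have hsplit := inner_add_left (𝕜 := ℝ) (Φ.starProjection f) (Φᗮ.starProjection f) x
  rw [starProjection_add_starProjection_orthogonal, hfx] at hsplit
  rw [← inner_starProjection_left_eq_right,
    starProjection_eq_self_iff.2 (starProjection_apply_mem _ _)]
  linarith

lemma one_sub_d2_sq_mul_norm_sq_starProjection_le [F.HasOrthogonalProjection]
    {G : Submodule ℝ H} [G.HasOrthogonalProjection]
    (hG : G ≤ F.map (Φ.starProjection : H →ₗ[ℝ] H)) {x : H} (hx : x ∈ Fᗮ) :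
    (1 - d2 F Φ ^ 2) * ‖G.starProjection x‖ ^ 2 ≤ d2 F Φ ^ 2 * ‖Φᗮ.starProjection x‖ ^ 2 := by
  set δ := d2 F Φ
  set g := G.starProjection x
  obtain ⟨f, hf, hfg⟩ := hG (G.starProjection_apply_mem x)
  change Φ.starProjection f = g at hfg
  have hg : ‖g‖ ^ 2 = ⟪g, x⟫ := by
    rw [← real_inner_self_eq_norm_sq, inner_starProjection_left_eq_right,
      starProjection_eq_self_iff.2 (starProjection_apply_mem _ _), real_inner_comm]
  have hgx : ‖g‖ ^ 2 ≤ δ * ‖f‖ * ‖Φᗮ.starProjection x‖ := by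
    calc ‖g‖ ^ 2 = -⟪Φᗮ.starProjection f, Φᗮ.starProjection x⟫ := by
          rw [hg, ← hfg, inner_starProjection_eq_neg_inner_orthogonal hf hx]
      _ ≤ ‖Φᗮ.starProjection f‖ * ‖Φᗮ.starProjection x‖ :=
          (neg_le_abs _).trans (abs_real_inner_le_norm _ _)
      _ ≤ δ * ‖f‖ * ‖Φᗮ.starProjection x‖ := by
          gcongr
          exact norm_starProjection_orthogonal_le_d2_mul hf
  have hf_norm : (1 - δ ^ 2) * ‖f‖ ^ 2 ≤ ‖g‖ ^ 2 := by
    have hpyth := norm_sq_eq_add_norm_sq_starProjection f Φ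
    rw [hfg] at hpyth
    nlinarith [norm_starProjection_orthogonal_le_d2_mul (Φ := Φ) hf,
      norm_nonneg (Φᗮ.starProjection f), norm_nonneg f]
  exact one_sub_sq_mul_le_sq_mul_sq (sq_nonneg _) hgx hf_norm

end GapEstimate

section GramSchmidt

variable {Φ : Submodule ℝ H} [Φ.HasOrthogonalProjection] {η q : ℕ → H} {p : ℕ}

variable (Φ) in
/-- The vector `q̃ᵢ` of the Gram–Schmidt recursion. -/
noncomputable def gramSchmidtResidual (η q : ℕ → H) (i : ℕ) : H :=
  Φ.starProjection (η i) - ∑ l ∈ Finset.Ico 1 i, ⟪q l, η i⟫ • q l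

variable (Φ) in
def IsGramSchmidt (η : ℕ → H) (p : ℕ) (q : ℕ → H) : Prop :=
  ∀ i ∈ Set.Icc 1 p, q i = ‖gramSchmidtResidual Φ η q i‖⁻¹ • gramSchmidtResidual Φ η q i

lemma IsGramSchmidt.residual_eq_norm_smul (hq : IsGramSchmidt Φ η p q) {i : ℕ}
    (hi : i ∈ Set.Icc 1 p) :
    gramSchmidtResidual Φ η q i = ‖gramSchmidtResidual Φ η q i‖ • q i := by
  rw [hq i hi, smul_smul]
  rcases eq_or_ne (gramSchmidtResidual Φ η q i) 0 with h | h
  · simp [h]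
  · rw [mul_inv_cancel₀ (norm_ne_zero_iff.2 h), one_smul]

lemma IsGramSchmidt.mem_span_starProjection (hq : IsGramSchmidt Φ η p q) {i : ℕ}
    (hi : i ∈ Set.Icc 1 p) :
    q i ∈ span ℝ ((fun l => Φ.starProjection (η l)) '' Set.Icc 1 i) := by
  induction i using Nat.strong_induction_on with
  | _ i ih =>
  rw [hq i hi]
  refine smul_mem _ _ (sub_mem (subset_span ⟨i, ⟨hi.1, le_rfl⟩, rfl⟩)
    (sum_mem fun l hl => smul_mem _ _ ?_))
  obtain ⟨hl1, hli⟩ := Finset.mem_Ico.1 hl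
  exact span_mono (Set.image_mono (Set.Icc_subset_Icc_right hli.le))
    (ih l hli ⟨hl1, hli.le.trans hi.2⟩)

lemma IsGramSchmidt.mem (hq : IsGramSchmidt Φ η p q) {i : ℕ} (hi : i ∈ Set.Icc 1 p) :
    q i ∈ Φ :=
  span_le.2 (by rintro _ ⟨l, -, rfl⟩; exact Φ.starProjection_apply_mem _)
    (hq.mem_span_starProjection hi)

lemma IsGramSchmidt.starProjection_mem_span (hq : IsGramSchmidt Φ η p q) {i : ℕ}
    (hi : i ∈ Set.Icc 1 p) : Φ.starProjection (η i) ∈ span ℝ (q '' Set.Icc 1 i) := by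
  have h : Φ.starProjection (η i) =
      ‖gramSchmidtResidual Φ η q i‖ • q i + ∑ l ∈ Finset.Ico 1 i, ⟪q l, η i⟫ • q l := by
    rw [← hq.residual_eq_norm_smul hi, gramSchmidtResidual, sub_add_cancel]
  rw [h]
  refine add_mem (smul_mem _ _ (subset_span ⟨i, ⟨hi.1, le_rfl⟩, rfl⟩))
    (sum_mem fun l hl => smul_mem _ _ (subset_span ⟨l, ?_, rfl⟩))
  obtain ⟨hl1, hli⟩ := Finset.mem_Ico.1 hl
  exact ⟨hl1, hli.le⟩

lemma IsGramSchmidt.residual_ne_zero (hq : IsGramSchmidt Φ η p q)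
    (hlin : LinearIndepOn ℝ (fun i => Φ.starProjection (η i)) (Set.Icc 1 p))
    {i : ℕ} (hi : i ∈ Set.Icc 1 p) : gramSchmidtResidual Φ η q i ≠ 0 := by
  intro h0
  rw [gramSchmidtResidual, sub_eq_zero] at h0
  have hdep : Φ.starProjection (η i) ∈
      span ℝ ((fun l => Φ.starProjection (η l)) '' Set.Icc 1 (i - 1)) := by
    rw [h0]
    refine sum_mem fun l hl => smul_mem _ _ ?_
    obtain ⟨hl1, hli⟩ := Finset.mem_Ico.1 hl
    exact span_mono (Set.image_mono (Set.Icc_subset_Icc_right (Nat.le_sub_one_of_lt hli)))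
      (hq.mem_span_starProjection ⟨hl1, hli.le.trans hi.2⟩)
  refine (hlin.mono ?_).notMem_span_of_insert
    (fun h => by have := (Set.mem_Icc.1 h).2; have := hi.1; omega) hdep
  rintro l (rfl | ⟨hl1, hli⟩)
  · exact hi
  · exact ⟨hl1, by have := hi.2; omega⟩

lemma IsGramSchmidt.norm_eq_one (hq : IsGramSchmidt Φ η p q)
    (hlin : LinearIndepOn ℝ (fun i => Φ.starProjection (η i)) (Set.Icc 1 p))
    {i : ℕ} (hi : i ∈ Set.Icc 1 p) : ‖q i‖ = 1 := by
  rw [hq i hi, norm_smul, norm_inv, norm_norm,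
    inv_mul_cancel₀ (norm_ne_zero_iff.2 (hq.residual_ne_zero hlin hi))]

lemma IsGramSchmidt.inner_residual_eq_zero (hq : IsGramSchmidt Φ η p q) {i : ℕ} (hi : i ≤ p)
    (hon : OrthonormalOn q (Finset.Ico 1 i)) {l : ℕ} (hl : l ∈ Finset.Ico 1 i) :
    ⟪q l, gramSchmidtResidual Φ η q i⟫ = 0 := by
  obtain ⟨hl1, hli⟩ := Finset.mem_Ico.1 hl
  rw [gramSchmidtResidual, inner_sub_right, hon.inner_right_sum hl,
    ← inner_starProjection_left_eq_right,
    starProjection_eq_self_iff.2 (hq.mem ⟨hl1, hli.le.trans hi⟩), sub_self]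

lemma IsGramSchmidt.orthonormalOn (hq : IsGramSchmidt Φ η p q)
    (hlin : LinearIndepOn ℝ (fun i => Φ.starProjection (η i)) (Set.Icc 1 p)) :
    OrthonormalOn q (Set.Icc 1 p) := by
  suffices h : ∀ m ≤ p, OrthonormalOn q (Set.Icc 1 m) from h p le_rfl
  intro m
  induction m with
  | zero => intro _ i hi; exact absurd hi.2 (by have := hi.1; omega)
  | succ m ih =>
    intro hm
    have hon : OrthonormalOn q (Finset.Ico 1 (m + 1)) :=
      (ih (by omega)).mono fun l hl => by
        simp only [Finset.coe_Ico, Set.mem_Ico] at hl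
        exact ⟨hl.1, by omega⟩
    have hIcc : Set.Icc 1 (m + 1) = insert (m + 1) (Set.Icc 1 m) := by
      ext l; simp only [Set.mem_insert_iff, Set.mem_Icc]; omega
    rw [hIcc]
    refine (ih (by omega)).insert (hq.norm_eq_one hlin ⟨by omega, hm⟩) fun l hl _ => ?_
    rw [hq (m + 1) ⟨by omega, hm⟩, real_inner_smul_right,
      hq.inner_residual_eq_zero hm hon (Finset.mem_Ico.2 ⟨hl.1, Nat.lt_succ_of_le hl.2⟩),
      mul_zero]

lemma IsGramSchmidt.starProjection_span_eq (hq : IsGramSchmidt Φ η p q) {k m : ℕ} (hk : k ≤ p)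
    (hm : m ∈ Set.Icc 1 k) :
    (span ℝ (q '' Finset.Icc 1 k)).starProjection (η m) = Φ.starProjection (η m) := by
  refine starProjection_eq_of_le_of_mem ?_ ?_ <;> rw [Finset.coe_Icc]
  · rw [span_le]
    rintro _ ⟨l, hl, rfl⟩
    exact hq.mem ⟨hl.1, hl.2.trans hk⟩
  · exact span_mono (Set.image_mono (Set.Icc_subset_Icc_right hm.2))
      (hq.starProjection_mem_span ⟨hm.1, hm.2.trans hk⟩)

lemma IsGramSchmidt.norm_sq_starProjection_orthogonal (hq : IsGramSchmidt Φ η p q)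
    (hlin : LinearIndepOn ℝ (fun i => Φ.starProjection (η i)) (Set.Icc 1 p))
    {j k m : ℕ} (hj : 1 ≤ j) (hk : k ≤ p) (hm : m ∈ Finset.Icc j k) (hηm : ‖η m‖ = 1) :
    ‖Φᗮ.starProjection (η m)‖ ^ 2 =
      1 - ‖(span ℝ (q '' Finset.Icc 1 (j - 1))).starProjection (η m)‖ ^ 2 -
        ∑ l ∈ Finset.Icc j k, ⟪q l, η m⟫ ^ 2 := by
  rw [Finset.mem_Icc] at hm
  have hqon : OrthonormalOn q (Finset.Icc 1 k) := by
    rw [Finset.coe_Icc]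
    exact (hq.orthonormalOn hlin).mono (Set.Icc_subset_Icc_right hk)
  have hsplit : Finset.Icc 1 k = Finset.Icc 1 (j - 1) ∪ Finset.Icc j k := by
    ext l; simp only [Finset.mem_union, Finset.mem_Icc]; omega
  have hdisj : Disjoint (Finset.Icc 1 (j - 1)) (Finset.Icc j k) :=
    Finset.disjoint_left.2 fun l hl hl' => by simp only [Finset.mem_Icc] at hl hl'; omega
  have h := norm_sq_eq_add_norm_sq_starProjection (η m) Φ
  rw [hηm, one_pow, ← hq.starProjection_span_eq hk ⟨by omega, hm.2⟩,
    hqon.norm_sq_starProjection_span, hsplit, Finset.sum_union hdisj,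
    ← (hqon.mono ?_).norm_sq_starProjection_span] at h
  · linarith
  · intro l
    simp only [Finset.coe_Icc, Set.mem_Icc]
    omega

variable [CompleteSpace H]

lemma IsGramSchmidt.dF_span_sq (hq : IsGramSchmidt Φ η p q)
    (hlin : LinearIndepOn ℝ (fun i => Φ.starProjection (η i)) (Set.Icc 1 p))
    {j k : ℕ} (hj : 1 ≤ j) (hk : k ≤ p) (hη : OrthonormalOn η (Set.Icc j k)) :
    dF (span ℝ (q '' Set.Icc j k)) (span ℝ (η '' Set.Icc j k)) ^ 2 =
      dF (span ℝ (η '' Set.Icc j k)) Φ ^ 2 +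
        ∑ m ∈ Finset.Icc j k, ‖(span ℝ (q '' Finset.Icc 1 (j - 1))).starProjection (η m)‖ ^ 2 := by
  have hqon : OrthonormalOn q (Finset.Icc j k) := by
    rw [Finset.coe_Icc]
    exact (hq.orthonormalOn hlin).mono (Set.Icc_subset_Icc hj hk)
  rw [← Finset.coe_Icc] at hη
  rw [← Finset.coe_Icc, hqon.dF_span_sq, hη.dF_span_sq]
  have hq_term : ∀ i ∈ Finset.Icc j k, ‖(span ℝ (η '' Finset.Icc j k))ᗮ.starProjection (q i)‖ ^ 2 =
      1 - ∑ m ∈ Finset.Icc j k, ⟪η m, q i⟫ ^ 2 := by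
    intro i hi
    have h := norm_sq_eq_add_norm_sq_starProjection (q i) (span ℝ (η '' Finset.Icc j k))
    rw [hqon.norm_eq_one hi, one_pow, hη.norm_sq_starProjection_span] at h
    linarith
  have hswap : ∑ i ∈ Finset.Icc j k, ∑ m ∈ Finset.Icc j k, ⟪η m, q i⟫ ^ 2 =
      ∑ m ∈ Finset.Icc j k, ∑ l ∈ Finset.Icc j k, ⟪q l, η m⟫ ^ 2 := by
    rw [Finset.sum_comm]
    simp only [real_inner_comm]
  rw [Finset.sum_congr rfl hq_term, Finset.sum_congr rfl fun m hm =>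
    hq.norm_sq_starProjection_orthogonal hlin hj hk hm (hη.norm_eq_one hm)]
  simp only [Finset.sum_sub_distrib]
  linarith

lemma IsGramSchmidt.one_sub_d2_sq_mul_sum_le (hq : IsGramSchmidt Φ η p q) {j k : ℕ}
    (hj : 1 ≤ j) (hk : k ≤ p) (hη : OrthonormalOn η (Set.Icc 1 k)) :
    (1 - d2 (span ℝ (η '' Set.Icc 1 (j - 1))) Φ ^ 2) *
        ∑ m ∈ Finset.Icc j k, ‖(span ℝ (q '' Finset.Icc 1 (j - 1))).starProjection (η m)‖ ^ 2 ≤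
      d2 (span ℝ (η '' Set.Icc 1 (j - 1))) Φ ^ 2 * dF (span ℝ (η '' Set.Icc j k)) Φ ^ 2 := by
  have hηjk : OrthonormalOn η (Finset.Icc j k) := by
    rw [Finset.coe_Icc]
    exact hη.mono (Set.Icc_subset_Icc_left hj)
  rw [← Finset.coe_Icc j k, hηjk.dF_span_sq, Finset.mul_sum, Finset.mul_sum]
  refine Finset.sum_le_sum fun m hm => one_sub_d2_sq_mul_norm_sq_starProjection_le ?_ ?_
  all_goals rw [Finset.mem_Icc] at hm
  · rw [Finset.coe_Icc, map_span, Set.image_image, span_le]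
    rintro _ ⟨l, hl, rfl⟩
    exact span_mono (Set.image_mono (Set.Icc_subset_Icc_right hl.2))
      (hq.mem_span_starProjection ⟨hl.1, by have := hl.2; omega⟩)
  · refine mem_orthogonal_span_of_inner_eq_zero ?_
    rintro _ ⟨l, hl, rfl⟩
    have hlm : l ≠ m := by have := hl.2; omega
    simpa [hlm] using hη l ⟨hl.1, by have := hl.2; omega⟩ m ⟨by omega, hm.2⟩

end GramSchmidt

end

theorem stmt17_general {H : Type*} [NormedAddCommGroup H] [InnerProductSpace ℝ H] [CompleteSpace H]
    (r n : ℕ) (η : ℕ → H)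
    (hη : ∀ i ∈ Set.Icc 1 r, ∀ j ∈ Set.Icc 1 r, ⟪η i, η j⟫ = if i = j then (1 : ℝ) else 0)
    (Φ : Submodule ℝ H) (hΦfd : FiniteDimensional ℝ Φ)
    (hlin : LinearIndependent ℝ (fun i : Set.Icc 1 (min n r) => proj Φ (η i.1)))
    (q : ℕ → H)
    (hq : ∀ i ∈ Set.Icc 1 (min n r),
      q i = ‖proj Φ (η i) - ∑ l ∈ Finset.Ico 1 i, ⟪q l, η i⟫ • q l‖⁻¹ •
            (proj Φ (η i) - ∑ l ∈ Finset.Ico 1 i, ⟪q l, η i⟫ • q l))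
    (j k : ℕ) (hj : 1 ≤ j) (hk : k ≤ min n r)
    (hd2 : d2 (span ℝ (η '' Set.Icc 1 (j - 1))) Φ < 1) :
    dF (span ℝ (η '' Set.Icc j k)) Φ ^ 2 ≤
        dF (span ℝ (q '' Set.Icc j k)) (span ℝ (η '' Set.Icc j k)) ^ 2 ∧
      dF (span ℝ (q '' Set.Icc j k)) (span ℝ (η '' Set.Icc j k)) ^ 2 ≤
        dF (span ℝ (η '' Set.Icc j k)) Φ ^ 2 /
          (1 - d2 (span ℝ (η '' Set.Icc 1 (j - 1))) Φ ^ 2) := by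
  simp only [proj_eq_starProjection] at hlin hq
  have hgs : IsGramSchmidt Φ η (min n r) q := hq
  have hηk : OrthonormalOn η (Set.Icc 1 k) :=
    (show OrthonormalOn η (Set.Icc 1 r) from hη).mono
      (Set.Icc_subset_Icc_right (hk.trans (min_le_right n r)))
  have hT0 : 0 ≤ ∑ m ∈ Finset.Icc j k,
      ‖(span ℝ (q '' Finset.Icc 1 (j - 1))).starProjection (η m)‖ ^ 2 :=
    Finset.sum_nonneg fun _ _ => sq_nonneg _
  have hT := hgs.one_sub_d2_sq_mul_sum_le hj hk hηk
  have hδ : 0 < 1 - d2 (span ℝ (η '' Set.Icc 1 (j - 1))) Φ ^ 2 := by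
    nlinarith [d2_nonneg (span ℝ (η '' Set.Icc 1 (j - 1))) Φ]
  rw [hgs.dF_span_sq hlin hj hk (hηk.mono (Set.Icc_subset_Icc_left hj)), le_div_iff₀ hδ]
  constructor <;> nlinarith

/-- Sharper lag-time-independent bound: if `d₂(span{η₁..η_{j−1}}, Φ) < 1`,
then `d_F(span{η_j..η_k}, Φ)² ≤ d_F(span{q_j..q_k}, span{η_j..η_k})²
  ≤ d_F(span{η_j..η_k}, Φ)² / (1 − d₂(span{η₁..η_{j−1}}, Φ)²)`. -/
theorem stmt17 {H : Type*} [NormedAddCommGroup H] [InnerProductSpace ℝ H] [CompleteSpace H]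
    (r n : ℕ) (hr : 1 ≤ r) (η : ℕ → H)
    (hη : ∀ i ∈ Set.Icc 1 r, ∀ j ∈ Set.Icc 1 r, ⟪η i, η j⟫ = if i = j then (1 : ℝ) else 0)
    (Φ : Submodule ℝ H) (hΦfd : FiniteDimensional ℝ Φ) (hΦn : Module.finrank ℝ Φ = n)
    (hlin : LinearIndependent ℝ (fun i : Set.Icc 1 (min n r) => proj Φ (η i.1)))
    (q : ℕ → H)
    (hq : ∀ i ∈ Set.Icc 1 (min n r),
      q i = ‖proj Φ (η i) - ∑ l ∈ Finset.Ico 1 i, ⟪q l, η i⟫ • q l‖⁻¹ •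
            (proj Φ (η i) - ∑ l ∈ Finset.Ico 1 i, ⟪q l, η i⟫ • q l))
    (j k : ℕ) (hj : 1 ≤ j) (hjk : j ≤ k) (hk : k ≤ min n r)
    (hd2 : d2 (span ℝ (η '' Set.Icc 1 (j - 1))) Φ < 1) :
    dF (span ℝ (η '' Set.Icc j k)) Φ ^ 2 ≤
        dF (span ℝ (q '' Set.Icc j k)) (span ℝ (η '' Set.Icc j k)) ^ 2 ∧
      dF (span ℝ (q '' Set.Icc j k)) (span ℝ (η '' Set.Icc j k)) ^ 2 ≤
        dF (span ℝ (η '' Set.Icc j k)) Φ ^ 2 /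
          (1 - d2 (span ℝ (η '' Set.Icc 1 (j - 1))) Φ ^ 2) :=
  stmt17_general r n η hη Φ hΦfd hlin q hq j k hj hk hd2

end
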